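/- The TASEP current J_n = Z̃_{n-1}/Z̃_n (with Z̃_n the one-transit partition function at fugacities z₁=α, z₂=β) converges, as n → ∞, to: 1/4 if α, β ≥ 1/2; α(1-α) if α < 1/2 and β > α; β(1-β) if β < 1/2 and α > β. -/

import Mathlib

open Filter

/-- Ballot number B_{m,q}, with B_{0,0} = 1 and B_{m,q} = 0 for q > m. -/
noncomputable def Bq (m q : ℕ) : ℝ :=
  if m = 0 then (if q = 0 then 1 else 0)
  else if q ≤ m then
    (q : ℝ) * (2 * m - q - 1).factorial / ((m.factorial : ℝ) * (m - q).factorial)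
  else 0

/-- TASEP normalisation Z̃_n(α,β). -/
noncomputable def Zt2 (n : ℕ) (α β : ℝ) : ℝ :=
  ∑ p ∈ Finset.range (n + 1), Bq n p *
    ∑ q ∈ Finset.range (p + 1), α⁻¹ ^ q * β⁻¹ ^ (p - q)

/-!
Write `a = α⁻¹`, `b = β⁻¹` and `F_n(t) = ∑_p B_{n,p} t^p`. The inner sum of `Z̃_n` is the complete
homogeneous polynomial `h_p(a, b)`, so `(a - b) Z̃_n = a F_n(a) - b F_n(b)`. The ballot recurrence
`B_{n+1,p+2} = B_{n+1,p+1} - B_{n,p}` gives `(1 - t) F_{n+1}(t) + t² F_n(t) = t C_n`, hence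
`F_n(t) = λ(t)^n (1 - t/(t-1) ∑_{k<n} C_k λ(t)^{-k-1})` with `λ(t) = t²/(t-1)`.

If `a > 2` and `b < a`, the functional equation `c = x + c²` of the Catalan generating function
bounds the partial sums by `1/a`, so `F_n(a)/λ(a)^n` has a positive limit, while
`F_n(b) = o(λ(a)^n)`; thus `Z̃_{n+1}/Z̃_n → λ(a) = 1/(α(1-α))`.

If `a, b ≤ 2`, the identity `(n+1)(n+1-p) B_{n+1,p} = (2n-p+1)(2n-p) B_{n,p}` gives
`Z̃_{n+1}/Z̃_n ≥ 4 - 6/(n+1)`, and `B_{n+1,p} ≤ 4M/(M-1) B_{n,p}` for `p ≤ (n+1)/M`. The terms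
with `p > (n+1)/M` are exponentially small against `Z̃_n ≥ (a+b) C_{n-1}`, by the Chernoff bound
`B_{n+1,p} 2^p ≤ θ^{-p} F_{n+1}(2θ)` with `θ > 1` close to `1`. Hence `Z̃_{n+1}/Z̃_n → 4`.
-/

open Finset Nat

lemma Bq_nonneg (m q : ℕ) : 0 ≤ Bq m q := by
  unfold Bq; split_ifs <;> positivity

lemma Bq_of_lt {m q : ℕ} (h : m < q) : Bq m q = 0 := by
  unfold Bq; split_ifs <;> first | rfl | omega

lemma Bq_succ_zero (m : ℕ) : Bq (m + 1) 0 = 0 := by simp [Bq]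

lemma Bq_eq_factorial {q k : ℕ} (h : q + k ≠ 0) :
    Bq (q + k) q = q * (q + 2 * k - 1)! / ((q + k)! * k !) := by
  rw [Bq, if_neg h, if_pos (by omega), show 2 * (q + k) - q - 1 = q + 2 * k - 1 by omega,
    Nat.add_sub_cancel_left]

lemma Bq_self (m : ℕ) : Bq m m = 1 := by
  cases m with
  | zero => simp [Bq]
  | succ m =>
    have h := Bq_eq_factorial (q := m + 1) (k := 0) (by omega)
    rw [add_zero, show m + 1 + 2 * 0 - 1 = m by omega, Nat.factorial_succ] at h
    rw [h, Nat.factorial_zero]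
    push_cast
    field_simp

lemma Bq_succ_one (n : ℕ) : Bq (n + 1) 1 = catalan n := by
  have h := congrArg (Nat.cast : ℕ → ℝ) (succ_mul_catalan_eq_centralBinom n)
  rw [Nat.centralBinom, Nat.cast_choose ℝ (by omega), show 2 * n - n = n by omega] at h
  rw [add_comm, Bq_eq_factorial (by omega), show 1 + 2 * n - 1 = 2 * n by omega, add_comm,
    Nat.factorial_succ]
  push_cast at h ⊢
  rw [eq_div_iff (by positivity)] at h
  rw [one_mul, div_eq_iff (by positivity)]
  linear_combination -h

lemma Bq_succ_add_two (n p : ℕ) : Bq (n + 1) (p + 2) = Bq (n + 1) (p + 1) - Bq n p := by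
  rcases lt_or_ge n (p + 1) with h | h
  · rcases (show p = n ∨ n < p by omega) with rfl | h'
    · rw [Bq_of_lt (by omega), Bq_self, Bq_self, sub_self]
    · rw [Bq_of_lt (by omega), Bq_of_lt (by omega), Bq_of_lt h', sub_self]
  obtain ⟨k, rfl⟩ := Nat.exists_eq_add_of_le h
  rw [show p + 1 + k + 1 = p + 2 + k by omega, Bq_eq_factorial (by omega),
    show p + 2 + k = p + 1 + (k + 1) by omega, Bq_eq_factorial (by omega),
    show p + 1 + k = p + (k + 1) by omega, Bq_eq_factorial (by omega),
    show p + 2 + 2 * k - 1 = p + 2 * k + 1 by omega,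
    show p + 1 + 2 * (k + 1) - 1 = p + 2 * k + 2 by omega,
    show p + 2 * (k + 1) - 1 = p + 2 * k + 1 by omega,
    show p + 1 + (k + 1) = p + (k + 1) + 1 by omega,
    Nat.factorial_succ (p + 2 * k + 1), Nat.factorial_succ (p + (k + 1)), Nat.factorial_succ k]
  push_cast
  field_simp
  ring

lemma mul_Bq_succ_eq (n p : ℕ) :
    ((n : ℝ) + 1) * ((n : ℝ) + 1 - p) * Bq (n + 1) p
      = (2 * (n : ℝ) - p + 1) * (2 * (n : ℝ) - p) * Bq n p := by
  rcases lt_or_ge n p with h | h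
  · rcases (show p = n + 1 ∨ n + 1 < p by omega) with rfl | h'
    · rw [Bq_of_lt h]; push_cast; ring
    · rw [Bq_of_lt h, Bq_of_lt h']; ring
  obtain ⟨k, rfl⟩ := Nat.exists_eq_add_of_le h
  rcases Nat.eq_zero_or_pos p with rfl | hp
  · rcases k with _ | k
    · simp [Bq_succ_zero]
    · rw [zero_add, Bq_succ_zero, Bq_succ_zero]; ring
  rw [show p + k + 1 = p + (k + 1) by omega, Bq_eq_factorial (by omega),
    Bq_eq_factorial (by omega),
    show p + 2 * (k + 1) - 1 = (p + 2 * k - 1) + 1 + 1 by omega,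
    Nat.factorial_succ (p + 2 * k - 1 + 1), Nat.factorial_succ (p + 2 * k - 1),
    show p + (k + 1) = p + k + 1 by omega, Nat.factorial_succ (p + k), Nat.factorial_succ k]
  have hcast : ((p + 2 * k - 1 : ℕ) : ℝ) = p + 2 * k - 1 := by
    rw [Nat.cast_sub (by omega)]; push_cast; ring
  push_cast
  rw [hcast]
  field_simp
  ring

lemma four_mul_sub_two_mul_Bq_le (n p : ℕ) :
    (4 * (n : ℝ) - 2) * Bq n p ≤ ((n : ℝ) + 1) * Bq (n + 1) p := by
  rcases lt_or_ge n p with h | h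
  · rw [Bq_of_lt h, mul_zero]
    exact mul_nonneg (by positivity) (Bq_nonneg _ _)
  have hp : (p : ℝ) ≤ n := by exact_mod_cast h
  have key := mul_Bq_succ_eq n p
  -- the gap `(2n-p+1)(2n-p) - (4n-2)(n+1-p)` is `(p-1)(p-2) ≥ 0`
  have hgap : 0 ≤ ((p : ℝ) - 1) * ((p : ℝ) - 2) := by
    rcases p with _ | _ | p
    · norm_num
    · norm_num
    · push_cast; nlinarith
  have hB := Bq_nonneg n p
  nlinarith [mul_nonneg hgap hB]

lemma sub_mul_Bq_succ_le (n p : ℕ) :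
    ((n : ℝ) + 1 - p) * Bq (n + 1) p ≤ 4 * ((n : ℝ) + 1) * Bq n p := by
  rcases lt_or_ge n p with h | h
  · have hp : (n : ℝ) + 1 ≤ p := by exact_mod_cast h
    rw [Bq_of_lt h, mul_zero]
    exact mul_nonpos_of_nonpos_of_nonneg (by linarith) (Bq_nonneg _ _)
  have hp : (p : ℝ) ≤ n := by exact_mod_cast h
  have key := mul_Bq_succ_eq n p
  have hB := Bq_nonneg n p
  have hB' := Bq_nonneg (n + 1) p
  have hfac : (2 * (n : ℝ) - p + 1) * (2 * n - p) ≤ 4 * ((n : ℝ) + 1) ^ 2 := by nlinarith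
  nlinarith [mul_le_mul_of_nonneg_right hfac hB]

noncomputable def ballotSum (n : ℕ) (w : ℕ → ℝ) : ℝ := ∑ p ∈ range (n + 1), Bq n p * w p

section ballotSum

variable {w : ℕ → ℝ}

lemma ballotSum_eq_sum_range {n N : ℕ} (h : n < N) :
    ballotSum n w = ∑ p ∈ range N, Bq n p * w p := by
  refine sum_subset (range_subset_range.2 h) fun p _ hp => ?_
  rw [Bq_of_lt (by simpa using hp), zero_mul]

lemma ballotSum_nonneg (hw : ∀ p, 0 ≤ w p) (n : ℕ) : 0 ≤ ballotSum n w :=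
  sum_nonneg fun p _ => mul_nonneg (Bq_nonneg n p) (hw p)

lemma ballotSum_mono {w' : ℕ → ℝ} (h : ∀ p, w p ≤ w' p) (n : ℕ) :
    ballotSum n w ≤ ballotSum n w' :=
  sum_le_sum fun p _ => mul_le_mul_of_nonneg_left (h p) (Bq_nonneg n p)

lemma sum_range_le_ballotSum (hw : ∀ p, 0 ≤ w p) (n P : ℕ) :
    ∑ p ∈ range P, Bq n p * w p ≤ ballotSum n w := by
  rw [ballotSum_eq_sum_range (lt_max_of_lt_right n.lt_succ_self)]
  exact sum_le_sum_of_subset_of_nonneg (range_subset_range.2 (le_max_left _ _))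
    fun p _ _ => mul_nonneg (Bq_nonneg n p) (hw p)

lemma ballotSum_pos (hw : ∀ p, 0 ≤ w p) {n : ℕ} (hn : 0 < w n) : 0 < ballotSum n w :=
  sum_pos' (fun p _ => mul_nonneg (Bq_nonneg n p) (hw p))
    ⟨n, self_mem_range_succ n, by rwa [Bq_self, one_mul]⟩

lemma catalan_mul_le_ballotSum_succ (hw : ∀ p, 0 ≤ w p) (n : ℕ) :
    catalan n * w 1 ≤ ballotSum (n + 1) w := by
  rw [← Bq_succ_one]
  exact single_le_sum (f := fun p => Bq (n + 1) p * w p)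
    (fun p _ => mul_nonneg (Bq_nonneg _ p) (hw p)) (by simp)

lemma four_mul_sub_two_mul_ballotSum_le (hw : ∀ p, 0 ≤ w p) (n : ℕ) :
    (4 * (n : ℝ) - 2) * ballotSum n w ≤ ((n : ℝ) + 1) * ballotSum (n + 1) w := by
  rw [ballotSum_eq_sum_range (Nat.lt_succ_of_lt n.lt_succ_self), ballotSum, mul_sum, mul_sum]
  refine sum_le_sum fun p _ => ?_
  rw [← mul_assoc, ← mul_assoc]
  exact mul_le_mul_of_nonneg_right (four_mul_sub_two_mul_Bq_le n p) (hw p)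

lemma sub_mul_sum_range_le_ballotSum (hw : ∀ p, 0 ≤ w p) (n P : ℕ) :
    ((n : ℝ) + 1 - P) * ∑ p ∈ range (P + 1), Bq (n + 1) p * w p
      ≤ 4 * ((n : ℝ) + 1) * ballotSum n w := by
  refine le_trans ?_ (mul_le_mul_of_nonneg_left (sum_range_le_ballotSum hw n (P + 1))
    (by positivity))
  rw [mul_sum, mul_sum]
  refine sum_le_sum fun p hp => ?_
  have hpP : (p : ℝ) ≤ P := by exact_mod_cast Nat.lt_succ_iff.1 (mem_range.1 hp)
  have hB := Bq_nonneg (n + 1) p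
  calc ((n : ℝ) + 1 - P) * (Bq (n + 1) p * w p)
      ≤ (((n : ℝ) + 1 - p) * Bq (n + 1) p) * w p := by
        rw [← mul_assoc]; gcongr; exact hw p
    _ ≤ 4 * ((n : ℝ) + 1) * Bq n p * w p :=
        mul_le_mul_of_nonneg_right (sub_mul_Bq_succ_le n p) (hw p)
    _ = 4 * ((n : ℝ) + 1) * (Bq n p * w p) := by ring

end ballotSum

noncomputable def catalanSum (n : ℕ) (x : ℝ) : ℝ :=
  ∑ k ∈ range n, (catalan k : ℝ) * x ^ (k + 1)

lemma catalanSum_succ (n : ℕ) (x : ℝ) :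
    catalanSum (n + 1) x = catalanSum n x + catalan n * x ^ (n + 1) :=
  sum_range_succ _ n

section catalanSum

variable {x : ℝ}

lemma catalanSum_nonneg (hx : 0 ≤ x) (n : ℕ) : 0 ≤ catalanSum n x :=
  sum_nonneg fun _ _ => by positivity

lemma catalanSum_mono (hx : 0 ≤ x) : Monotone (catalanSum · x) :=
  monotone_nat_of_le_succ fun n => by
    rw [catalanSum_succ]
    exact le_add_of_nonneg_right (by positivity)

lemma catalanSum_succ_le (hx : 0 ≤ x) (n : ℕ) :
    catalanSum (n + 1) x ≤ x + catalanSum n x ^ 2 := by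
  set f : ℕ → ℝ := fun k => catalan k * x ^ (k + 1)
  have hconv : ∀ k, f (k + 1) = ∑ j ∈ range (k + 1), f j * f (k - j) := fun k => by
    simp only [f, catalan_succ', Nat.sum_antidiagonal_eq_sum_range_succ (fun i j =>
      catalan i * catalan j), Nat.cast_sum, Nat.cast_mul, sum_mul]
    refine sum_congr rfl fun j hj => ?_
    rw [show k + 1 + 1 = (j + 1) + (k - j + 1) by have := mem_range.1 hj; omega, pow_add]
    ring
  have hS : ∀ m, catalanSum m x = ∑ k ∈ range m, f k := fun _ => rfl
  calc catalanSum (n + 1) x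
      = x + ∑ k ∈ range n, ∑ j ∈ range (k + 1), f j * f (k - j) := by
        rw [hS, sum_range_succ', add_comm]
        simp only [hconv, f, catalan_zero]
        ring
    _ = x + ∑ i ∈ range n, ∑ j ∈ range (n - i), f i * f j := by
        rw [sum_range_diag_flip n (fun i j => f i * f j)]
    _ ≤ x + ∑ i ∈ range n, ∑ j ∈ range n, f i * f j := by
        have hf : ∀ k, 0 ≤ f k := fun k => by positivity
        exact add_le_add_right (sum_le_sum fun i _ => sum_le_sum_of_subset_of_nonneg
          (range_subset_range.2 (Nat.sub_le n i)) fun j _ _ => mul_nonneg (hf i) (hf j)) x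
    _ = x + catalanSum n x ^ 2 := by rw [sq, catalanSum, sum_mul_sum]

lemma catalanSum_le_of_add_sq_le {u : ℝ} (hx : 0 ≤ x) (hu : 0 ≤ u) (h : x + u ^ 2 ≤ u)
    (n : ℕ) : catalanSum n x ≤ u := by
  induction n with
  | zero => simpa [catalanSum] using hu
  | succ n ih =>
    have hsq : catalanSum n x ^ 2 ≤ u ^ 2 := pow_le_pow_left₀ (catalanSum_nonneg hx n) ih 2
    linarith [catalanSum_succ_le hx n]

end catalanSum

noncomputable def ballotPoly (n : ℕ) (t : ℝ) : ℝ := ballotSum n (t ^ ·)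

lemma ballotPoly_nonneg {t : ℝ} (ht : 0 ≤ t) (n : ℕ) : 0 ≤ ballotPoly n t :=
  ballotSum_nonneg (fun p => pow_nonneg ht p) n

lemma ballotPoly_mono {t t' : ℝ} (ht : 0 ≤ t) (h : t ≤ t') (n : ℕ) :
    ballotPoly n t ≤ ballotPoly n t' :=
  ballotSum_mono (fun p => pow_le_pow_left₀ ht h p) n

lemma one_sub_mul_ballotPoly_succ_add (n : ℕ) (t : ℝ) :
    (1 - t) * ballotPoly (n + 1) t + t ^ 2 * ballotPoly n t = t * catalan n := by
  have h1 : ballotPoly (n + 1) t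
      = ∑ p ∈ range (n + 1), Bq (n + 1) (p + 2) * t ^ (p + 2) + catalan n * t := by
    rw [ballotPoly, ballotSum_eq_sum_range (N := n + 3) (by omega), sum_range_succ',
      sum_range_succ', Bq_succ_zero, Bq_succ_one]
    simp
  have h2 : t * ballotPoly (n + 1) t
      = ∑ p ∈ range (n + 1), Bq (n + 1) (p + 1) * t ^ (p + 2) := by
    rw [ballotPoly, ballotSum, sum_range_succ', Bq_succ_zero, mul_add, mul_sum]
    simp only [zero_mul, mul_zero, add_zero]
    exact sum_congr rfl fun p _ => by ring
  have h3 : t ^ 2 * ballotPoly n t = ∑ p ∈ range (n + 1), Bq n p * t ^ (p + 2) := by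
    rw [ballotPoly, ballotSum, mul_sum]
    exact sum_congr rfl fun p _ => by ring
  simp only [Bq_succ_add_two, sub_mul, sum_sub_distrib] at h1
  linear_combination h1 - h2 + h3

lemma ballotPoly_eq {t : ℝ} (ht : 1 < t) (n : ℕ) :
    ballotPoly n t
      = (t ^ 2 / (t - 1)) ^ n * (1 - t / (t - 1) * catalanSum n (t ^ 2 / (t - 1))⁻¹) := by
  have ht1 : t - 1 ≠ 0 := by linarith
  have hL : t ^ 2 / (t - 1) ≠ 0 := by positivity
  induction n with
  | zero => simp [ballotPoly, ballotSum, Bq_self, catalanSum]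
  | succ n ih =>
    have hrec : ballotPoly (n + 1) t = (t ^ 2 * ballotPoly n t - t * catalan n) / (t - 1) := by
      field_simp
      linear_combination -one_sub_mul_ballotPoly_succ_add n t
    have hI : (t ^ 2 / (t - 1)) ^ (n + 1) * ((t ^ 2 / (t - 1)) ^ (n + 1))⁻¹ = 1 :=
      mul_inv_cancel₀ (pow_ne_zero _ hL)
    rw [hrec, ih, catalanSum_succ, inv_pow]
    linear_combination (t * (t - 1)⁻¹ * catalan n) * hI

lemma ballotPoly_le_pow {t : ℝ} (ht : 1 < t) (n : ℕ) :
    ballotPoly n t ≤ (t ^ 2 / (t - 1)) ^ n := by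
  have ht1 : 0 < t - 1 := by linarith
  rw [ballotPoly_eq ht]
  refine mul_le_of_le_one_right (by positivity) (sub_le_self _ ?_)
  exact mul_nonneg (by positivity) (catalanSum_nonneg (by positivity) n)

noncomputable def homSum (p : ℕ) (x y : ℝ) : ℝ := ∑ q ∈ range (p + 1), x ^ q * y ^ (p - q)

lemma homSum_nonneg {x y : ℝ} (hx : 0 ≤ x) (hy : 0 ≤ y) (p : ℕ) : 0 ≤ homSum p x y :=
  sum_nonneg fun _ _ => by positivity

lemma homSum_comm (p : ℕ) (x y : ℝ) : homSum p x y = homSum p y x := by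
  rw [homSum, ← sum_range_reflect]
  refine sum_congr rfl fun q hq => ?_
  rw [mul_comm, show p - (p + 1 - 1 - q) = q by have := mem_range.1 hq; omega,
    show p + 1 - 1 - q = p - q by omega]

lemma homSum_one (x y : ℝ) : homSum 1 x y = x + y := by
  simp [homSum, sum_range_succ, add_comm]

lemma sub_mul_homSum (p : ℕ) (x y : ℝ) :
    (x - y) * homSum p x y = x ^ (p + 1) - y ^ (p + 1) := by
  rw [← geom_sum₂_mul, mul_comm, homSum, Nat.add_sub_cancel]

lemma homSum_le {x y m : ℝ} (hx : 0 ≤ x) (hxm : x ≤ m) (hy : 0 ≤ y) (hym : y ≤ m) (p : ℕ) :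
    homSum p x y ≤ (p + 1) * m ^ p := by
  calc homSum p x y ≤ ∑ q ∈ range (p + 1), m ^ q * m ^ (p - q) :=
        sum_le_sum fun q _ => by gcongr; exact pow_nonneg (hx.trans hxm) q
    _ = (p + 1) * m ^ p := by
        rw [sum_congr rfl fun q hq => by rw [← pow_add, Nat.add_sub_cancel' (by
          have := mem_range.1 hq; omega)]]
        simp

lemma Zt2_eq_ballotSum (n : ℕ) (α β : ℝ) : Zt2 n α β = ballotSum n (homSum · α⁻¹ β⁻¹) := rfl

lemma Zt2_pos {α β : ℝ} (hα : 0 < α) (hβ : 0 < β) (n : ℕ) : 0 < Zt2 n α β :=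
  ballotSum_pos (homSum_nonneg (by positivity) (by positivity))
    (sum_pos (fun _ _ => by positivity) nonempty_range_add_one)

lemma Zt2_comm (n : ℕ) (α β : ℝ) : Zt2 n α β = Zt2 n β α := by
  simp only [Zt2_eq_ballotSum, homSum_comm _ α⁻¹]

lemma sub_mul_Zt2 (n : ℕ) (α β : ℝ) :
    (α⁻¹ - β⁻¹) * Zt2 n α β = α⁻¹ * ballotPoly n α⁻¹ - β⁻¹ * ballotPoly n β⁻¹ := by
  rw [Zt2_eq_ballotSum, ballotPoly, ballotPoly, ballotSum, ballotSum, ballotSum, mul_sum,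
    mul_sum, mul_sum, ← sum_sub_distrib]
  refine sum_congr rfl fun p _ => ?_
  linear_combination Bq n p * sub_mul_homSum p α⁻¹ β⁻¹

lemma catalan_mul_le_Zt2_succ {α β : ℝ} (hα : 0 < α) (hβ : 0 < β) (n : ℕ) :
    catalan n * (α⁻¹ + β⁻¹) ≤ Zt2 (n + 1) α β := by
  rw [← homSum_one]
  exact catalan_mul_le_ballotSum_succ (homSum_nonneg (by positivity) (by positivity)) n

lemma tendsto_succ_div_of_tendsto_div_pow {u : ℕ → ℝ} {r c : ℝ} (hr : r ≠ 0) (hc : c ≠ 0)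
    (h : Tendsto (fun n => u n / r ^ n) atTop (nhds c)) :
    Tendsto (fun n => u (n + 1) / u n) atTop (nhds r) := by
  have h' := ((h.comp (tendsto_add_atTop_nat 1)).div h hc).const_mul r
  rw [div_self hc, mul_one] at h'
  refine h'.congr fun n => ?_
  simp only [Pi.div_apply, Function.comp_apply, pow_succ]
  field_simp

lemma tendsto_pred_div_of_tendsto_succ_div {u : ℕ → ℝ} {r : ℝ} (hr : r ≠ 0)
    (h : Tendsto (fun n => u (n + 1) / u n) atTop (nhds r)) :
    Tendsto (fun n => u (n - 1) / u n) atTop (nhds r⁻¹) := by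
  rw [← tendsto_add_atTop_iff_nat 1]
  simpa using h.inv₀ hr

lemma sq_div_sub_one_lt_sq_div_sub_one {s t : ℝ} (hs : 2 ≤ s) (hst : s < t) :
    s ^ 2 / (s - 1) < t ^ 2 / (t - 1) := by
  rw [div_lt_div_iff₀ (by linarith) (by linarith)]
  nlinarith [mul_pos (sub_pos.2 hst) (show 0 < (s - 1) * (t - 1) - 1 by nlinarith)]

lemma exists_tendsto_ballotPoly_div_pow {a : ℝ} (ha : 2 < a) :
    ∃ c > 0, Tendsto (fun n => ballotPoly n a / (a ^ 2 / (a - 1)) ^ n) atTop (nhds c) := by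
  have ha1 : 0 < a - 1 := by linarith
  set L := a ^ 2 / (a - 1) with hL
  -- `a⁻¹` is a fixed point of `u ↦ L⁻¹ + u²`, the equation of the Catalan generating function
  have hfix : L⁻¹ + a⁻¹ ^ 2 ≤ a⁻¹ := le_of_eq (by rw [hL, inv_div]; field_simp; ring)
  have hS : ∀ n, catalanSum n L⁻¹ ≤ a⁻¹ :=
    catalanSum_le_of_add_sq_le (by positivity) (by positivity) hfix
  have hlim := tendsto_atTop_ciSup (catalanSum_mono (x := L⁻¹) (by positivity))
    ⟨a⁻¹, by rintro _ ⟨n, rfl⟩; exact hS n⟩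
  refine ⟨1 - a / (a - 1) * ⨆ n, catalanSum n L⁻¹, ?_, ?_⟩
  · have hle : a / (a - 1) * ⨆ n, catalanSum n L⁻¹ ≤ a / (a - 1) * a⁻¹ :=
      mul_le_mul_of_nonneg_left (ciSup_le hS) (by positivity)
    have hlt : a / (a - 1) * a⁻¹ < 1 := by
      rw [div_mul_eq_mul_div, mul_inv_cancel₀ (by positivity), div_lt_one ha1]
      linarith
    linarith
  · refine (tendsto_const_nhds.sub (hlim.const_mul _)).congr fun n => ?_
    rw [ballotPoly_eq (by linarith), mul_div_cancel_left₀ _ (by positivity)]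

lemma tendsto_ballotPoly_div_pow_zero {a b : ℝ} (ha : 2 < a) (hb : 0 ≤ b) (hba : b < a) :
    Tendsto (fun n => ballotPoly n b / (a ^ 2 / (a - 1)) ^ n) atTop (nhds 0) := by
  set t := max b 2
  have ht : 2 ≤ t := le_max_right b 2
  have hlt : t ^ 2 / (t - 1) < a ^ 2 / (a - 1) :=
    sq_div_sub_one_lt_sq_div_sub_one ht (max_lt hba ha)
  have hLt : 0 < t ^ 2 / (t - 1) := div_pos (by positivity) (by linarith)
  have hLa := hLt.trans hlt
  refine squeeze_zero (fun n => div_nonneg (ballotPoly_nonneg hb n) (pow_pos hLa n).le)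
    (fun n => ?_) (tendsto_pow_atTop_nhds_zero_of_lt_one (div_nonneg hLt.le hLa.le)
      ((div_lt_one hLa).2 hlt))
  rw [div_pow (t ^ 2 / (t - 1))]
  refine div_le_div_of_nonneg_right ?_ (pow_pos hLa n).le
  exact (ballotPoly_mono hb (le_max_left b 2) n).trans (ballotPoly_le_pow (by linarith) n)

lemma tendsto_Zt2_succ_div_of_lt_half {α β : ℝ} (hα : 0 < α) (hβ : 0 < β) (h : α < 1 / 2)
    (hαβ : α < β) :
    Tendsto (fun n => Zt2 (n + 1) α β / Zt2 n α β) atTop (nhds (α * (1 - α))⁻¹) := by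
  have ha : 2 < α⁻¹ := by rw [lt_inv_comm₀ two_pos hα]; linarith
  have hba : β⁻¹ < α⁻¹ := inv_strictAnti₀ hα hαβ
  have hab : α⁻¹ - β⁻¹ ≠ 0 := sub_ne_zero.2 hba.ne'
  obtain ⟨c, hc, hlim⟩ := exists_tendsto_ballotPoly_div_pow ha
  have hZ := ((hlim.const_mul α⁻¹).sub ((tendsto_ballotPoly_div_pow_zero ha (by positivity)
    hba).const_mul β⁻¹)).div_const (α⁻¹ - β⁻¹)
  rw [mul_zero, sub_zero] at hZ
  have hL : (α * (1 - α))⁻¹ = α⁻¹ ^ 2 / (α⁻¹ - 1) := by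
    have : 1 - α ≠ 0 := by linarith
    field_simp
  have ha1 : 0 < α⁻¹ - 1 := by linarith
  have hZ' : Tendsto (fun n => Zt2 n α β / (α⁻¹ ^ 2 / (α⁻¹ - 1)) ^ n) atTop
      (nhds (α⁻¹ * c / (α⁻¹ - β⁻¹))) := by
    refine hZ.congr fun n => ?_
    rw [← mul_div_cancel_left₀ (Zt2 n α β / _) hab]
    congr 1
    rw [← mul_div_assoc (α⁻¹ - β⁻¹), sub_mul_Zt2]
    ring
  rw [hL]
  exact tendsto_succ_div_of_tendsto_div_pow (u := (Zt2 · α β))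
    (div_pos (by positivity) ha1).ne' (div_ne_zero (by positivity) hab) hZ'

lemma exists_sq_div_two_mul_sub_one_lt {M : ℕ} (hM : M ≠ 0) :
    ∃ ρ : ℝ, 1 < ρ ∧ (ρ ^ M) ^ 2 / (2 * ρ ^ M - 1) < ρ := by
  have hM1 : (1 : ℝ) ≤ M := Nat.one_le_cast.2 (Nat.pos_of_ne_zero hM)
  set h : ℝ := 1 / (2 * M) with hh
  have hh0 : 0 < h := by positivity
  have hh1 : h ≤ 1 / 2 := by rw [hh, div_le_div_iff₀ (by positivity) two_pos]; linarith
  set θ := 1 + h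
  -- `θ^2/(2θ-1) ≤ 1 + h^2 ≤ exp(h^2)`, whose `M`-th power `exp(h/2)` is still below `1 + h`
  have hθ : (θ ^ 2 / (2 * θ - 1)) ^ M < θ := calc
    (θ ^ 2 / (2 * θ - 1)) ^ M ≤ Real.exp (h ^ 2) ^ M := by
        refine pow_le_pow_left₀ (div_nonneg (by positivity) (by linarith)) ?_ M
        rw [div_le_iff₀ (by linarith)]
        nlinarith [Real.add_one_le_exp (h ^ 2), sq_nonneg h]
    _ = Real.exp (h / 2) := by
        rw [← Real.exp_nat_mul, hh]
        field_simp
    _ < 1 / (1 - h / 2) := Real.exp_bound_div_one_sub_of_interval' (by positivity) (by linarith)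
    _ ≤ θ := by
        rw [div_le_iff₀ (by linarith)]
        nlinarith
  have hρ : (θ ^ (M⁻¹ : ℝ)) ^ M = θ := Real.rpow_inv_natCast_pow (by positivity) hM
  refine ⟨θ ^ (M⁻¹ : ℝ), Real.one_lt_rpow (by linarith) (by positivity), ?_⟩
  rwa [hρ, ← pow_lt_pow_iff_left₀ (div_nonneg (by positivity) (by linarith)) (by positivity) hM,
    hρ]

lemma pow_mul_sum_Ico_Bq_mul_le {w : ℕ → ℝ} (hw : ∀ p, 0 ≤ w p)
    (hw2 : ∀ p, w p ≤ (p + 1) * 2 ^ p) {θ : ℝ} (hθ : 1 ≤ θ) (N P : ℕ) :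
    θ ^ P * ∑ p ∈ Ico (P + 1) (N + 1), Bq N p * w p ≤ (N + 1) * ballotPoly N (2 * θ) := by
  rw [mul_sum, ballotPoly, ballotSum, mul_sum]
  refine (sum_le_sum fun p hp => ?_).trans (sum_le_sum_of_subset_of_nonneg
    (fun p hp => mem_range.2 (mem_Ico.1 hp).2) fun p _ _ => ?_)
  · obtain ⟨hPp, hpN⟩ := mem_Ico.1 hp
    have hpN' : (p : ℝ) + 1 ≤ N + 1 := by exact_mod_cast hpN
    have hθp : θ ^ P ≤ θ ^ p := pow_le_pow_right₀ hθ (by omega)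
    have hB := Bq_nonneg N p
    calc θ ^ P * (Bq N p * w p) ≤ θ ^ p * (Bq N p * ((p + 1) * 2 ^ p)) := by
          gcongr
          · exact mul_nonneg hB (hw p)
          · exact hw2 p
      _ ≤ θ ^ p * (Bq N p * ((N + 1) * 2 ^ p)) := by gcongr
      _ = (N + 1) * (Bq N p * (2 * θ) ^ p) := by ring
  · have := Bq_nonneg N p
    positivity

lemma Zt2_succ_le {α β : ℝ} (hα : 1 / 2 ≤ α) (hβ : 1 / 2 ≤ β) {M θ : ℝ} (hM : 1 < M)
    (hθ : 1 ≤ θ) {n P : ℕ} (hMP : M * P ≤ n + 1) :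
    Zt2 (n + 1) α β ≤ 4 * M / (M - 1) * Zt2 n α β
      + (n + 2) * ballotPoly (n + 1) (2 * θ) / θ ^ P := by
  set w : ℕ → ℝ := (homSum · α⁻¹ β⁻¹)
  have hα2 : α⁻¹ ≤ 2 := by rw [inv_le_comm₀ (by linarith) two_pos]; linarith
  have hβ2 : β⁻¹ ≤ 2 := by rw [inv_le_comm₀ (by linarith) two_pos]; linarith
  have hw : ∀ p, 0 ≤ w p := homSum_nonneg (by positivity) (by positivity)
  have hw2 : ∀ p, w p ≤ (p + 1) * 2 ^ p :=
    homSum_le (by positivity) hα2 (by positivity) hβ2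
  have hP : (P : ℝ) < n + 1 := by nlinarith [(Nat.cast_nonneg P : (0 : ℝ) ≤ P)]
  have hPn : P + 1 ≤ n + 2 := by
    have : P < n + 1 := by exact_mod_cast hP
    omega
  have hbulk := sub_mul_sum_range_le_ballotSum hw n P
  have htail := pow_mul_sum_Ico_Bq_mul_le hw hw2 hθ (n + 1) P
  change ballotSum (n + 1) w ≤ 4 * M / (M - 1) * ballotSum n w + _
  rw [ballotSum, ← sum_range_add_sum_Ico _ hPn]
  push_cast at htail
  gcongr
  · rw [div_mul_eq_mul_div, le_div_iff₀ (by linarith)]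
    have hS : 0 ≤ ∑ p ∈ range (P + 1), Bq (n + 1) p * w p :=
      sum_nonneg fun p _ => mul_nonneg (Bq_nonneg _ p) (hw p)
    refine le_of_mul_le_mul_left ?_ (by positivity : (0 : ℝ) < n + 1)
    nlinarith [mul_le_mul_of_nonneg_left hbulk (by linarith : (0 : ℝ) ≤ M),
      mul_nonneg hS (by linarith : (0 : ℝ) ≤ n + 1 - M * P)]
  · rw [le_div_iff₀' (by positivity), show n + 2 = n + 1 + 1 from rfl]
    linarith

lemma four_pow_le_Zt2_succ {α β : ℝ} (hα : 0 < α) (hβ : 0 < β) (n : ℕ) :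
    (α⁻¹ + β⁻¹) * 4 ^ n ≤ 2 * ((n : ℝ) + 1) ^ 2 * Zt2 (n + 1) α β := by
  have hcat : (4 : ℝ) ^ n ≤ 2 * ((n : ℝ) + 1) ^ 2 * catalan n := by
    have h := Nat.four_pow_le_two_mul_add_one_mul_central_binom n
    rw [← Nat.centralBinom, ← succ_mul_catalan_eq_centralBinom] at h
    have h' : (4 : ℝ) ^ n ≤ (2 * n + 1) * ((n + 1) * catalan n) := by exact_mod_cast h
    nlinarith [(Nat.cast_nonneg (catalan n) : (0 : ℝ) ≤ catalan n)]
  calc (α⁻¹ + β⁻¹) * 4 ^ n ≤ (α⁻¹ + β⁻¹) * (2 * ((n : ℝ) + 1) ^ 2 * catalan n) := by gcongr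
    _ = 2 * ((n : ℝ) + 1) ^ 2 * (catalan n * (α⁻¹ + β⁻¹)) := by ring
    _ ≤ 2 * ((n : ℝ) + 1) ^ 2 * Zt2 (n + 1) α β := by
        gcongr; exact catalan_mul_le_Zt2_succ hα hβ n

lemma ballotPoly_div_pow_le {M : ℕ} (hM : M ≠ 0) {ρ : ℝ} (hρ : 1 < ρ) (n : ℕ) :
    ballotPoly (n + 2) (2 * ρ ^ M) / (ρ ^ M) ^ ((n + 1) / M)
      ≤ 16 * ρ ^ M * 4 ^ n * ((ρ ^ M) ^ 2 / (2 * ρ ^ M - 1) / ρ) ^ (n + 2) := by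
  set θ := ρ ^ M
  have hθ : 1 ≤ θ := one_le_pow₀ hρ.le
  set B := θ ^ 2 / (2 * θ - 1)
  have hB : 0 ≤ B / ρ := div_nonneg (div_nonneg (by positivity) (by linarith)) (by linarith)
  have hF : ballotPoly (n + 2) (2 * θ) ≤ 16 * B ^ (n + 2) * 4 ^ n := by
    refine (ballotPoly_le_pow (by linarith) (n + 2)).trans (le_of_eq ?_)
    simp only [B]
    ring
  have hP : ρ ^ (n + 2) ≤ θ * θ ^ ((n + 1) / M) := calc
    ρ ^ (n + 2) ≤ ρ ^ (M * ((n + 1) / M + 1)) :=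
        pow_le_pow_right₀ hρ.le (Nat.lt_mul_div_succ (n + 1) (Nat.pos_of_ne_zero hM))
    _ = θ * θ ^ ((n + 1) / M) := by rw [pow_mul, pow_succ, mul_comm]
  rw [div_le_iff₀ (by positivity)]
  calc ballotPoly (n + 2) (2 * θ) ≤ 16 * B ^ (n + 2) * 4 ^ n := hF
    _ = 16 * 4 ^ n * (B / ρ) ^ (n + 2) * ρ ^ (n + 2) := by
        rw [div_pow B, mul_assoc _ (_ / _), div_mul_cancel₀ _ (pow_ne_zero _ (by linarith))]
        ring
    _ ≤ 16 * 4 ^ n * (B / ρ) ^ (n + 2) * (θ * θ ^ ((n + 1) / M)) :=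
        mul_le_mul_of_nonneg_left hP (mul_nonneg (by positivity) (pow_nonneg hB _))
    _ = 16 * θ * 4 ^ n * (B / ρ) ^ (n + 2) * θ ^ ((n + 1) / M) := by ring

lemma tendsto_tail_div_Zt2_succ {α β : ℝ} (hα : 0 < α) (hβ : 0 < β) {M : ℕ} (hM : M ≠ 0)
    {ρ : ℝ} (hρ : 1 < ρ) (hρM : (ρ ^ M) ^ 2 / (2 * ρ ^ M - 1) < ρ) :
    Tendsto (fun n : ℕ => ((n : ℝ) + 3) * ballotPoly (n + 2) (2 * ρ ^ M)
      / (ρ ^ M) ^ ((n + 1) / M) / Zt2 (n + 1) α β) atTop (nhds 0) := by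
  set r := (ρ ^ M) ^ 2 / (2 * ρ ^ M - 1) / ρ
  have hθ : 1 ≤ ρ ^ M := one_le_pow₀ hρ.le
  have hr : 0 < r := div_pos (div_pos (by positivity) (by linarith)) (by linarith)
  have hr1 : r < 1 := (div_lt_one (by linarith)).2 hρM
  have hab : 0 < α⁻¹ + β⁻¹ := by positivity
  set K := 32 * ρ ^ M / ((α⁻¹ + β⁻¹) * r)
  have hlim : Tendsto (fun n : ℕ => K * (((n : ℝ) + 3) ^ 3 * r ^ (n + 3))) atTop (nhds 0) := by
    simpa using ((tendsto_pow_const_mul_const_pow_of_lt_one 3 hr.le hr1).comp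
      (tendsto_add_atTop_nat 3)).const_mul K
  refine squeeze_zero (fun n => ?_) (fun n => ?_) hlim
  · have := ballotPoly_nonneg (t := 2 * ρ ^ M) (by positivity) (n + 2)
    have := Zt2_pos hα hβ (n + 1)
    positivity
  have hZ := Zt2_pos hα hβ (n + 1)
  have hcat := four_pow_le_Zt2_succ hα hβ n
  rw [mul_div_assoc, div_le_iff₀ hZ]
  calc ((n : ℝ) + 3) * (ballotPoly (n + 2) (2 * ρ ^ M) / (ρ ^ M) ^ ((n + 1) / M))
      ≤ ((n : ℝ) + 3) * (16 * ρ ^ M * 4 ^ n * r ^ (n + 2)) := by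
        gcongr; exact ballotPoly_div_pow_le hM hρ n
    _ = 16 * ρ ^ M * ((n : ℝ) + 3) * r ^ (n + 2) / (α⁻¹ + β⁻¹) * ((α⁻¹ + β⁻¹) * 4 ^ n) := by
        field_simp
    _ ≤ 16 * ρ ^ M * ((n : ℝ) + 3) * r ^ (n + 2) / (α⁻¹ + β⁻¹)
          * (2 * ((n : ℝ) + 3) ^ 2 * Zt2 (n + 1) α β) := by
        refine mul_le_mul_of_nonneg_left (hcat.trans ?_)
          (div_nonneg (mul_nonneg (by positivity) (pow_nonneg hr.le _)) hab.le)
        gcongr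
        linarith
    _ = K * (((n : ℝ) + 3) ^ 3 * r ^ (n + 3)) * Zt2 (n + 1) α β := by
        simp only [K]
        field_simp
        ring

lemma eventually_Zt2_succ_le {α β : ℝ} (hα : 1 / 2 ≤ α) (hβ : 1 / 2 ≤ β) {ε : ℝ}
    (hε : 0 < ε) :
    ∀ᶠ n in atTop, Zt2 (n + 1) α β ≤ (4 + ε) * Zt2 n α β := by
  obtain ⟨M, hM⟩ : ∃ M : ℕ, 8 / ε + 1 ≤ M := exists_nat_ge _
  have hM1 : (1 : ℝ) < M := by linarith [div_pos (by norm_num : (0 : ℝ) < 8) hε]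
  have hM0 : M ≠ 0 := by rintro rfl; norm_num at hM1
  have hbulk : 4 * (M : ℝ) / (M - 1) ≤ 4 + ε / 2 := by
    have : 8 ≤ (M - 1) * ε := (div_le_iff₀ hε).1 (by linarith)
    rw [div_le_iff₀ (by linarith)]
    nlinarith
  obtain ⟨ρ, hρ, hρM⟩ := exists_sq_div_two_mul_sub_one_lt hM0
  have hα0 : 0 < α := by linarith
  have hβ0 : 0 < β := by linarith
  have htail := (tendsto_tail_div_Zt2_succ hα0 hβ0 hM0 hρ hρM).eventually
    (ge_mem_nhds (half_pos hε))
  have hshift : ∀ᶠ n in atTop, Zt2 (n + 2) α β ≤ (4 + ε) * Zt2 (n + 1) α β := by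
    filter_upwards [htail] with n hn
    have hZ := Zt2_pos hα0 hβ0 (n + 1)
    rw [div_le_iff₀ hZ] at hn
    have hMP : (M : ℝ) * ((n + 1) / M : ℕ) ≤ (n + 1 : ℕ) + 1 := by
      have := Nat.mul_div_le (n + 1) M
      have : ((M * ((n + 1) / M) : ℕ) : ℝ) ≤ (n + 1 : ℕ) := by exact_mod_cast this
      push_cast at this ⊢
      linarith
    have hsplit : Zt2 (n + 2) α β ≤ 4 * M / (M - 1) * Zt2 (n + 1) α β
        + ((n : ℝ) + 3) * ballotPoly (n + 2) (2 * ρ ^ M) / (ρ ^ M) ^ ((n + 1) / M) := by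
      convert Zt2_succ_le hα hβ hM1 (one_le_pow₀ hρ.le) hMP using 4
      push_cast
      ring
    nlinarith [mul_le_mul_of_nonneg_right hbulk hZ.le]
  filter_upwards [(tendsto_sub_atTop_nat 1).eventually hshift, eventually_ge_atTop 1]
    with n hn hn1
  rwa [show n - 1 + 2 = n + 1 by omega, show n - 1 + 1 = n by omega] at hn

lemma tendsto_Zt2_succ_div_of_half_le {α β : ℝ} (hα : 1 / 2 ≤ α) (hβ : 1 / 2 ≤ β) :
    Tendsto (fun n => Zt2 (n + 1) α β / Zt2 n α β) atTop (nhds 4) := by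
  have hα0 : 0 < α := by linarith
  have hβ0 : 0 < β := by linarith
  have hw : ∀ p, 0 ≤ homSum p α⁻¹ β⁻¹ := homSum_nonneg (by positivity) (by positivity)
  have hlow : ∀ n : ℕ, 4 - 6 * (1 / ((n : ℝ) + 1)) ≤ Zt2 (n + 1) α β / Zt2 n α β := fun n => by
    rw [le_div_iff₀ (Zt2_pos hα0 hβ0 n)]
    have := four_mul_sub_two_mul_ballotSum_le hw n
    rw [← Zt2_eq_ballotSum, ← Zt2_eq_ballotSum] at this
    have hn : (0 : ℝ) < n + 1 := by positivity
    field_simp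
    linarith
  have hlim : Tendsto (fun n : ℕ => 4 - 6 * (1 / ((n : ℝ) + 1))) atTop (nhds 4) := by
    simpa using (tendsto_one_div_add_atTop_nhds_zero_nat.const_mul 6).const_sub (4 : ℝ)
  refine tendsto_order.2 ⟨fun c hc => ?_, fun c hc => ?_⟩
  · filter_upwards [hlim.eventually (lt_mem_nhds hc)] with n hn
    exact hn.trans_le (hlow n)
  · filter_upwards [eventually_Zt2_succ_le hα hβ (half_pos (sub_pos.2 hc))] with n hn
    rw [div_lt_iff₀ (Zt2_pos hα0 hβ0 n)]
    nlinarith [Zt2_pos hα0 hβ0 n]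

/-- The TASEP current Jₙ = Z̃_{n-1}/Z̃ₙ converges to 1/4, α(1-α) or β(1-β) in the
three regions of the phase diagram. -/
theorem tasep_current_limit (α β : ℝ) (hα : 0 < α) (hβ : 0 < β) :
    (1 / 2 ≤ α → 1 / 2 ≤ β →
      Tendsto (fun n : ℕ => Zt2 (n - 1) α β / Zt2 n α β) atTop (nhds (1 / 4))) ∧
    (α < 1 / 2 → α < β →
      Tendsto (fun n : ℕ => Zt2 (n - 1) α β / Zt2 n α β) atTop (nhds (α * (1 - α)))) ∧
    (β < 1 / 2 → β < α →
      Tendsto (fun n : ℕ => Zt2 (n - 1) α β / Zt2 n α β) atTop (nhds (β * (1 - β)))) := by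
  refine ⟨fun h1 h2 => ?_, fun h1 h2 => ?_, fun h1 h2 => ?_⟩
  · rw [one_div]
    exact tendsto_pred_div_of_tendsto_succ_div (u := (Zt2 · α β)) four_ne_zero
      (tendsto_Zt2_succ_div_of_half_le h1 h2)
  · have hα1 : α * (1 - α) ≠ 0 := mul_ne_zero hα.ne' (by linarith)
    rw [← inv_inv (α * (1 - α))]
    exact tendsto_pred_div_of_tendsto_succ_div (u := (Zt2 · α β)) (inv_ne_zero hα1)
      (tendsto_Zt2_succ_div_of_lt_half hα hβ h1 h2)
  · have hβ1 : β * (1 - β) ≠ 0 := mul_ne_zero hβ.ne' (by linarith)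
    simp_rw [Zt2_comm _ α β]
    rw [← inv_inv (β * (1 - β))]
    exact tendsto_pred_div_of_tendsto_succ_div (u := (Zt2 · β α)) (inv_ne_zero hβ1)
      (tendsto_Zt2_succ_div_of_lt_half hβ hα h1 h2)
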